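/- Let H, H' ∈ ℝ^{n×d} with rows h_1,…,h_n and h'_1,…,h'_n, and V ∈ ℝ^{m×d} with rows v_1,…,v_m. Define MMD²(H,V) = (1/n²)Σ_{i,j} k(h_i,h_j) + (1/m²)Σ_{i,j} k(v_i,v_j) − (2/(mn))Σ_{i,j} k(h_i,v_j), where k(x,y) = exp(−γ‖x−y‖²) with γ > 0. Then |MMD²(H,V) − MMD²(H',V)| ≤ (4√γ/√n)·‖H − H'‖_F. -/

import Mathlib

open scoped BigOperators

noncomputable def gaussK (d : ℕ) (γ : ℝ) (x y : EuclideanSpace ℝ (Fin d)) : ℝ :=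
  Real.exp (-γ * ‖x - y‖ ^ 2)

noncomputable def MMDsq (n m d : ℕ) (γ : ℝ)
    (H : Fin n → EuclideanSpace ℝ (Fin d)) (V : Fin m → EuclideanSpace ℝ (Fin d)) : ℝ :=
  (1 / (n : ℝ) ^ 2) * ∑ i, ∑ j, gaussK d γ (H i) (H j)
    + (1 / (m : ℝ) ^ 2) * ∑ i, ∑ j, gaussK d γ (V i) (V j)
    - (2 / ((m : ℝ) * n)) * ∑ i, ∑ j, gaussK d γ (H i) (V j)

lemma expsq_lip : LipschitzWith 1 (fun t : ℝ => Real.exp (-(t ^ 2))) := by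
  apply lipschitzWith_of_nnnorm_deriv_le
  · exact (differentiable_pow 2).neg.exp
  · intro x
    have hd : HasDerivAt (fun t : ℝ => Real.exp (-(t ^ 2))) (Real.exp (-(x ^ 2)) * (-(2 * x))) x := by
      have h1 : HasDerivAt (fun t : ℝ => -(t ^ 2)) (-(2 * x)) x := by
        simpa [Pi.neg_def] using ((hasDerivAt_pow 2 x).neg)
      simpa [Function.comp_def] using (Real.hasDerivAt_exp (-(x ^ 2))).comp x h1
    rw [hd.deriv, ← NNReal.coe_le_coe]
    simp only [coe_nnnorm, Real.norm_eq_abs, NNReal.coe_one]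
    have h2 : 2 * |x| ≤ Real.exp (x ^ 2) := by
      have := Real.add_one_le_exp (x ^ 2)
      nlinarith [sq_abs x, sq_nonneg (|x| - 1)]
    rw [abs_mul, Real.abs_exp, abs_neg, Real.exp_neg]
    rw [inv_mul_le_iff₀ (Real.exp_pos _)]
    calc |2 * x| = 2 * |x| := by rw [abs_mul]; simp
      _ ≤ Real.exp (x ^ 2) := h2
      _ = Real.exp (x ^ 2) * 1 := by ring

lemma gaussK_lip (d : ℕ) (γ : ℝ) (hγ : 0 < γ) (x x' y : EuclideanSpace ℝ (Fin d)) :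
    |gaussK d γ x y - gaussK d γ x' y| ≤ Real.sqrt γ * ‖x - x'‖ := by
  have hrepr : ∀ z : EuclideanSpace ℝ (Fin d),
      gaussK d γ z y = Real.exp (-((Real.sqrt γ * ‖z - y‖) ^ 2)) := by
    intro z
    unfold gaussK
    congr 1
    rw [mul_pow, Real.sq_sqrt hγ.le]
    ring
  rw [hrepr x, hrepr x']
  have h := expsq_lip.dist_le_mul (Real.sqrt γ * ‖x - y‖) (Real.sqrt γ * ‖x' - y‖)
  simp only [Real.dist_eq, NNReal.coe_one, one_mul] at h
  refine h.trans ?_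
  rw [← mul_sub, abs_mul, abs_of_nonneg (Real.sqrt_nonneg γ)]
  have : |‖x - y‖ - ‖x' - y‖| ≤ ‖x - x'‖ := by
    have := abs_norm_sub_norm_le (x - y) (x' - y)
    simpa using this
  exact mul_le_mul_of_nonneg_left this (Real.sqrt_nonneg γ)

lemma gaussK_symm (d : ℕ) (γ : ℝ) (x y : EuclideanSpace ℝ (Fin d)) :
    gaussK d γ x y = gaussK d γ y x := by
  unfold gaussK; rw [norm_sub_rev]

theorem mmd_sq_lipschitz (n m d : ℕ) (hn : 0 < n) (hm : 0 < m) (γ : ℝ) (hγ : 0 < γ)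
    (H H' : Fin n → EuclideanSpace ℝ (Fin d)) (V : Fin m → EuclideanSpace ℝ (Fin d)) :
    |MMDsq n m d γ H V - MMDsq n m d γ H' V| ≤
      (4 * Real.sqrt γ / Real.sqrt n) * Real.sqrt (∑ i, ‖H i - H' i‖ ^ 2) := by
  have hn' : (0 : ℝ) < n := by exact_mod_cast hn
  have hm' : (0 : ℝ) < m := by exact_mod_cast hm
  set δ : Fin n → ℝ := fun i => ‖H i - H' i‖ with hδdef
  have hδnn : ∀ i, 0 ≤ δ i := fun i => norm_nonneg _
  set S : ℝ := ∑ i, δ i with hSdef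
  have hSnn : 0 ≤ S := Finset.sum_nonneg fun i _ => hδnn i
  set Q : ℝ := Real.sqrt (∑ i, δ i ^ 2) with hQdef
  have hQnn : 0 ≤ Q := Real.sqrt_nonneg _
  have hsγ : 0 ≤ Real.sqrt γ := Real.sqrt_nonneg γ
  -- Bound on the H-H block
  have hA : |(∑ i, ∑ j, gaussK d γ (H i) (H j)) - ∑ i, ∑ j, gaussK d γ (H' i) (H' j)|
      ≤ Real.sqrt γ * (2 * n * S) := by
    rw [← Finset.sum_sub_distrib]
    refine (Finset.abs_sum_le_sum_abs _ _).trans ?_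
    have hb : ∀ i ∈ (Finset.univ : Finset (Fin n)),
        |(∑ j, gaussK d γ (H i) (H j)) - ∑ j, gaussK d γ (H' i) (H' j)|
        ≤ ∑ j, Real.sqrt γ * (δ i + δ j) := by
      intro i _
      rw [← Finset.sum_sub_distrib]
      refine (Finset.abs_sum_le_sum_abs _ _).trans (Finset.sum_le_sum fun j _ => ?_)
      calc |gaussK d γ (H i) (H j) - gaussK d γ (H' i) (H' j)|
          ≤ |gaussK d γ (H i) (H j) - gaussK d γ (H' i) (H j)|
            + |gaussK d γ (H' i) (H j) - gaussK d γ (H' i) (H' j)| := abs_sub_le _ _ _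
        _ ≤ Real.sqrt γ * δ i + Real.sqrt γ * δ j := by
            refine add_le_add (gaussK_lip d γ hγ _ _ _) ?_
            rw [gaussK_symm d γ (H' i) (H j), gaussK_symm d γ (H' i) (H' j)]
            exact gaussK_lip d γ hγ _ _ _
        _ = Real.sqrt γ * (δ i + δ j) := by ring
    refine (Finset.sum_le_sum hb).trans ?_
    have heq : ∀ i : Fin n, (∑ j : Fin n, Real.sqrt γ * (δ i + δ j))
        = Real.sqrt γ * ((n : ℝ) * δ i + S) := by
      intro i
      rw [← Finset.mul_sum, Finset.sum_add_distrib, Finset.sum_const, Finset.card_univ,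
        Fintype.card_fin, nsmul_eq_mul, hSdef]
    rw [Finset.sum_congr rfl fun i _ => heq i]
    rw [← Finset.mul_sum, Finset.sum_add_distrib, ← Finset.mul_sum, Finset.sum_const,
      Finset.card_univ, Fintype.card_fin, nsmul_eq_mul, ← hSdef]
    exact le_of_eq (by ring)
  -- Bound on the H-V block
  have hB : |(∑ i, ∑ j, gaussK d γ (H i) (V j)) - ∑ i, ∑ j, gaussK d γ (H' i) (V j)|
      ≤ Real.sqrt γ * ((m : ℝ) * S) := by
    rw [← Finset.sum_sub_distrib]
    refine (Finset.abs_sum_le_sum_abs _ _).trans ?_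
    have hb : ∀ i ∈ (Finset.univ : Finset (Fin n)),
        |(∑ j, gaussK d γ (H i) (V j)) - ∑ j, gaussK d γ (H' i) (V j)|
        ≤ ∑ _j : Fin m, Real.sqrt γ * δ i := by
      intro i _
      rw [← Finset.sum_sub_distrib]
      exact (Finset.abs_sum_le_sum_abs _ _).trans
        (Finset.sum_le_sum fun j _ => gaussK_lip d γ hγ _ _ _)
    refine (Finset.sum_le_sum hb).trans ?_
    simp only [Finset.sum_const, Finset.card_univ, Fintype.card_fin, nsmul_eq_mul]
    rw [← Finset.mul_sum, ← Finset.mul_sum, ← hSdef]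
    exact le_of_eq (by ring)
  -- Decompose the difference
  have hdiff : MMDsq n m d γ H V - MMDsq n m d γ H' V
      = (1 / (n : ℝ) ^ 2) * ((∑ i, ∑ j, gaussK d γ (H i) (H j))
          - ∑ i, ∑ j, gaussK d γ (H' i) (H' j))
        - (2 / ((m : ℝ) * n)) * ((∑ i, ∑ j, gaussK d γ (H i) (V j))
          - ∑ i, ∑ j, gaussK d γ (H' i) (V j)) := by
    unfold MMDsq; ring
  have hpos1 : (0 : ℝ) ≤ 1 / (n : ℝ) ^ 2 := by positivity
  have hpos2 : (0 : ℝ) ≤ 2 / ((m : ℝ) * n) := by positivity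
  have hstep : |MMDsq n m d γ H V - MMDsq n m d γ H' V| ≤ 4 * Real.sqrt γ * S / n := by
    rw [hdiff]
    refine (abs_sub _ _).trans ?_
    rw [abs_mul, abs_mul, abs_of_nonneg hpos1, abs_of_nonneg hpos2]
    have h1 := mul_le_mul_of_nonneg_left hA hpos1
    have h2 := mul_le_mul_of_nonneg_left hB hpos2
    refine (add_le_add h1 h2).trans (le_of_eq ?_)
    field_simp
    ring
  refine hstep.trans ?_
  -- Cauchy–Schwarz: S ≤ √n * Q
  have hcs : S ^ 2 ≤ (n : ℝ) * ∑ i, δ i ^ 2 := by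
    have := sq_sum_le_card_mul_sum_sq (s := (Finset.univ : Finset (Fin n))) (f := δ)
    simpa [hSdef, Finset.card_univ] using this
  have hSQ : S ≤ Real.sqrt n * Q := by
    have h1 : S ≤ Real.sqrt ((n : ℝ) * ∑ i, δ i ^ 2) := by
      rw [show S = Real.sqrt (S ^ 2) by rw [Real.sqrt_sq hSnn]]
      exact Real.sqrt_le_sqrt hcs
    rwa [Real.sqrt_mul (le_of_lt hn') _, ← hQdef] at h1
  have hsqn : Real.sqrt n * Real.sqrt n = (n : ℝ) := Real.mul_self_sqrt (le_of_lt hn')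
  have hsqnpos : (0 : ℝ) < Real.sqrt n := Real.sqrt_pos.mpr hn'
  have ha : (0 : ℝ) ≤ 4 * Real.sqrt γ := by positivity
  rw [div_mul_eq_mul_div, div_le_div_iff₀ hn' hsqnpos]
  calc 4 * Real.sqrt γ * S * Real.sqrt n
      ≤ 4 * Real.sqrt γ * (Real.sqrt n * Q) * Real.sqrt n :=
        mul_le_mul_of_nonneg_right (mul_le_mul_of_nonneg_left hSQ ha) hsqnpos.le
    _ = 4 * Real.sqrt γ * Q * (Real.sqrt n * Real.sqrt n) := by ring
    _ = 4 * Real.sqrt γ * Q * n := by rw [hsqn]
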